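/- For fixed η > 0 and t ∈ ℝ, the function g_t(x) = (1/2) log( ((x-t)²+η²)/(x²+η²) ) belongs to H^{1/2}(ℝ), i.e. the double integral ∬_{ℝ²} |g_t(x) - g_t(y)|²/(x-y)² dx dy is finite. -/

import Mathlib

open Real MeasureTheory

/-!
Let `ψ x = (1 + x²)⁻¹`. The numerator and denominator inside the logarithm differ by `t (t - 2x)`,
which grows only linearly, so `g_t² ≤ A ψ`; likewise `|g_t'| ≤ B ψ`, and since `ψ` changes by at
most a factor 3 over distances `≤ 1`, the mean value theorem gives
`|g_t x - g_t y| ≤ 3B ψ(x) |x - y|` for `|x - y| ≤ 1`. This Lipschitz bound near the diagonal and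
the bound on `g_t²` away from it dominate the integrand by `C (ψ(x) + ψ(y)) ψ(x - y)`, a sum of
two convolution integrands of the integrable function `ψ` with itself.
-/

/-- g_t(x) = (1/2) log(((x-t)²+η²)/(x²+η²)). -/
noncomputable def gReg (η t x : ℝ) : ℝ :=
  (1 / 2) * Real.log (((x - t) ^ 2 + η ^ 2) / (x ^ 2 + η ^ 2))

lemma inv_one_add_sq_le_three_mul {x z : ℝ} (h : |z - x| ≤ 1) :
    (1 + z ^ 2)⁻¹ ≤ 3 * (1 + x ^ 2)⁻¹ := by
  have : (z - x) ^ 2 ≤ 1 := by nlinarith [sq_abs (z - x), abs_nonneg (z - x)]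
  rw [← div_eq_mul_inv, inv_le_iff_one_le_mul₀ (by positivity), div_mul_eq_mul_div,
    le_div_iff₀ (by positivity)]
  nlinarith [sq_nonneg (x - 2 * z)]

lemma abs_sub_le_of_abs_deriv_le_mul_inv_one_add_sq {f f' : ℝ → ℝ} {B : ℝ}
    (hf : ∀ x, HasDerivAt f (f' x) x) (hf' : ∀ x, |f' x| ≤ B * (1 + x ^ 2)⁻¹)
    {x y : ℝ} (hxy : |x - y| ≤ 1) :
    |f x - f y| ≤ 3 * B * (1 + x ^ 2)⁻¹ * |x - y| := by
  have hB : 0 ≤ B := nonneg_of_mul_nonneg_left ((abs_nonneg _).trans (hf' 0)) (by positivity)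
  have hball : y ∈ Metric.closedBall x 1 := by rwa [Metric.mem_closedBall, dist_comm]
  have hbound : ∀ z ∈ Metric.closedBall x 1, ‖f' z‖ ≤ 3 * B * (1 + x ^ 2)⁻¹ := fun z hz =>
    calc ‖f' z‖ ≤ B * (1 + z ^ 2)⁻¹ := hf' z
      _ ≤ B * (3 * (1 + x ^ 2)⁻¹) :=
        mul_le_mul_of_nonneg_left (inv_one_add_sq_le_three_mul (Metric.mem_closedBall.1 hz)) hB
      _ = 3 * B * (1 + x ^ 2)⁻¹ := by ring
  simpa only [Real.norm_eq_abs] using Convex.norm_image_sub_le_of_norm_hasDerivWithin_le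
    (fun z _ => (hf z).hasDerivWithinAt) hbound (convex_closedBall x 1) hball
    (Metric.mem_closedBall_self zero_le_one)

lemma sq_sub_div_sq_le_of_decay {f : ℝ → ℝ} {A L : ℝ}
    (hA : ∀ x, f x ^ 2 ≤ A * (1 + x ^ 2)⁻¹)
    (hL : ∀ x y, |x - y| ≤ 1 → |f x - f y| ≤ L * (1 + x ^ 2)⁻¹ * |x - y|) (x y : ℝ) :
    (f x - f y) ^ 2 / (x - y) ^ 2 ≤
      (2 * L ^ 2 + 4 * A) * (((1 + x ^ 2)⁻¹ + (1 + y ^ 2)⁻¹) * (1 + (x - y) ^ 2)⁻¹) := by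
  have hA0 : 0 ≤ A := nonneg_of_mul_nonneg_left ((sq_nonneg _).trans (hA 0)) (by positivity)
  have hψy : 0 < (1 + y ^ 2)⁻¹ := by positivity
  rcases eq_or_ne x y with rfl | hne
  · simp only [sub_self, zero_pow two_ne_zero, div_zero]
    positivity
  have hd : 0 < (x - y) ^ 2 := sq_pos_of_ne_zero (sub_ne_zero.2 hne)
  rcases le_or_gt |x - y| 1 with hnear | hfar
  · have hsq : (f x - f y) ^ 2 ≤ (L * (1 + x ^ 2)⁻¹) ^ 2 * (x - y) ^ 2 := by
      simpa only [sq_abs, mul_pow] using pow_le_pow_left₀ (abs_nonneg _) (hL x y hnear) 2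
    have hψx1 : (1 + x ^ 2)⁻¹ ≤ 1 := inv_le_one_of_one_le₀ (by nlinarith)
    have hψd : 1 ≤ 2 * (1 + (x - y) ^ 2)⁻¹ := by
      rw [← div_eq_mul_inv, le_div_iff₀ (by positivity)]
      nlinarith [sq_abs (x - y), abs_nonneg (x - y)]
    calc (f x - f y) ^ 2 / (x - y) ^ 2 ≤ L ^ 2 * (1 + x ^ 2)⁻¹ * (1 + x ^ 2)⁻¹ := by
          rw [div_le_iff₀ hd]; linarith
      _ ≤ L ^ 2 * (1 + x ^ 2)⁻¹ * (2 * (1 + (x - y) ^ 2)⁻¹) := by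
          gcongr; exact hψx1.trans hψd
      _ = 2 * L ^ 2 * ((1 + x ^ 2)⁻¹ * (1 + (x - y) ^ 2)⁻¹) := by ring
      _ ≤ _ := by gcongr <;> linarith
  · have hsq : (f x - f y) ^ 2 ≤ 2 * A * ((1 + x ^ 2)⁻¹ + (1 + y ^ 2)⁻¹) := by
      nlinarith [hA x, hA y, sq_nonneg (f x + f y)]
    have hinv : ((x - y) ^ 2)⁻¹ ≤ 2 * (1 + (x - y) ^ 2)⁻¹ := by
      rw [← div_eq_mul_inv, inv_le_iff_one_le_mul₀ hd, div_mul_eq_mul_div,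
        le_div_iff₀ (by positivity)]
      nlinarith [sq_abs (x - y), abs_nonneg (x - y)]
    calc (f x - f y) ^ 2 / (x - y) ^ 2
        ≤ 2 * A * ((1 + x ^ 2)⁻¹ + (1 + y ^ 2)⁻¹) * (2 * (1 + (x - y) ^ 2)⁻¹) := by
          rw [div_eq_mul_inv]; gcongr
      _ = 4 * A * (((1 + x ^ 2)⁻¹ + (1 + y ^ 2)⁻¹) * (1 + (x - y) ^ 2)⁻¹) := by ring
      _ ≤ _ := by gcongr; nlinarith

lemma integrable_inv_one_add_sq_mul_inv_one_add_sq_sub :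
    Integrable fun p : ℝ × ℝ =>
      ((1 + p.1 ^ 2)⁻¹ + (1 + p.2 ^ 2)⁻¹) * (1 + (p.1 - p.2) ^ 2)⁻¹ := by
  have hconv : Integrable (fun p : ℝ × ℝ => (1 + p.2 ^ 2)⁻¹ * (1 + (p.1 - p.2) ^ 2)⁻¹) :=
    Measure.volume_eq_prod ℝ ℝ ▸
      integrable_inv_one_add_sq.convolution_integrand (ContinuousLinearMap.mul ℝ ℝ)
        integrable_inv_one_add_sq
  have hswap : Integrable (fun p : ℝ × ℝ => (1 + p.1 ^ 2)⁻¹ * (1 + (p.1 - p.2) ^ 2)⁻¹) := by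
    have := (Measure.volume_eq_prod ℝ ℝ ▸ hconv).swap
    rw [← Measure.volume_eq_prod] at this
    refine this.congr (Filter.Eventually.of_forall fun p => ?_)
    simp only [Function.comp_apply, Prod.fst_swap, Prod.snd_swap]
    ring
  simp_rw [add_mul]
  exact hswap.add hconv

theorem integrable_sq_sub_div_sq_of_decay {f : ℝ → ℝ} (hf : Measurable f) {A L : ℝ}
    (hA : ∀ x, f x ^ 2 ≤ A * (1 + x ^ 2)⁻¹)
    (hL : ∀ x y, |x - y| ≤ 1 → |f x - f y| ≤ L * (1 + x ^ 2)⁻¹ * |x - y|) :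
    Integrable (fun p : ℝ × ℝ => (f p.1 - f p.2) ^ 2 / (p.1 - p.2) ^ 2) := by
  have hmeas : Measurable (fun p : ℝ × ℝ => (f p.1 - f p.2) ^ 2 / (p.1 - p.2) ^ 2) :=
    (((hf.comp measurable_fst).sub (hf.comp measurable_snd)).pow_const 2).div
      ((measurable_fst.sub measurable_snd).pow_const 2)
  refine (integrable_inv_one_add_sq_mul_inv_one_add_sq_sub.const_mul (2 * L ^ 2 + 4 * A)).mono'
    hmeas.aestronglyMeasurable (.of_forall fun p => ?_)
  rw [Real.norm_of_nonneg (by positivity)]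
  exact sq_sub_div_sq_le_of_decay hA hL p.1 p.2

lemma abs_log_sub_log_le {a b : ℝ} (ha : 0 < a) (hb : 0 < b) :
    |log a - log b| ≤ |a - b| * (a⁻¹ + b⁻¹) := by
  have hab : log a - log b ≤ (a - b) * b⁻¹ := by
    rw [← log_div ha.ne' hb.ne', sub_mul, mul_inv_cancel₀ hb.ne', ← div_eq_mul_inv]
    exact log_le_sub_one_of_pos (div_pos ha hb)
  have hba : log b - log a ≤ (b - a) * a⁻¹ := by
    rw [← log_div hb.ne' ha.ne', sub_mul, mul_inv_cancel₀ ha.ne', ← div_eq_mul_inv]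
    exact log_le_sub_one_of_pos (div_pos hb ha)
  rw [abs_le]
  constructor
  · nlinarith [neg_abs_le (a - b), inv_pos.2 ha, inv_pos.2 hb, abs_nonneg (a - b)]
  · nlinarith [le_abs_self (a - b), inv_pos.2 ha, inv_pos.2 hb, abs_nonneg (a - b)]

lemma inv_sq_sub_add_sq_le (t : ℝ) {η : ℝ} (hη : 0 < η) (x : ℝ) :
    ((x - t) ^ 2 + η ^ 2)⁻¹ ≤ (2 + (1 + 2 * t ^ 2) / η ^ 2) * (1 + x ^ 2)⁻¹ := by
  have hN : 0 < (x - t) ^ 2 + η ^ 2 := by positivity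
  have hN1 : 1 ≤ ((x - t) ^ 2 + η ^ 2) / η ^ 2 := by
    rw [le_div_iff₀ (by positivity)]; nlinarith [sq_nonneg (x - t)]
  rw [← div_eq_mul_inv, inv_le_iff_one_le_mul₀ hN, div_mul_eq_mul_div,
    le_div_iff₀ (by positivity), one_mul]
  calc 1 + x ^ 2 ≤ 2 * ((x - t) ^ 2 + η ^ 2) + (1 + 2 * t ^ 2) := by
        nlinarith [sq_nonneg (x - 2 * t), sq_nonneg η]
    _ ≤ 2 * ((x - t) ^ 2 + η ^ 2) + (1 + 2 * t ^ 2) * (((x - t) ^ 2 + η ^ 2) / η ^ 2) := by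
        gcongr; exact le_mul_of_one_le_right (by positivity) hN1
    _ = (2 + (1 + 2 * t ^ 2) / η ^ 2) * ((x - t) ^ 2 + η ^ 2) := by ring

lemma exists_inv_add_inv_le (t : ℝ) {η : ℝ} (hη : 0 < η) :
    ∃ K, ∀ x, ((x - t) ^ 2 + η ^ 2)⁻¹ + (x ^ 2 + η ^ 2)⁻¹ ≤ K * (1 + x ^ 2)⁻¹ := by
  refine ⟨(2 + (1 + 2 * t ^ 2) / η ^ 2) + (2 + (η ^ 2)⁻¹), fun x => ?_⟩
  have h0 := inv_sq_sub_add_sq_le 0 hη x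
  norm_num at h0
  linarith [inv_sq_sub_add_sq_le t hη x]

lemma gReg_eq {η : ℝ} (hη : 0 < η) (t x : ℝ) :
    gReg η t x = (log ((x - t) ^ 2 + η ^ 2) - log (x ^ 2 + η ^ 2)) / 2 := by
  rw [gReg, log_div (by positivity) (by positivity)]
  ring

lemma hasDerivAt_gReg {η : ℝ} (hη : 0 < η) (t x : ℝ) :
    HasDerivAt (gReg η t)
      (t * (x * (x - t) - η ^ 2) / (((x - t) ^ 2 + η ^ 2) * (x ^ 2 + η ^ 2))) x := by
  have hN : 0 < (x - t) ^ 2 + η ^ 2 := by positivity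
  have hD : 0 < x ^ 2 + η ^ 2 := by positivity
  have hlogN : HasDerivAt (fun y => log ((y - t) ^ 2 + η ^ 2))
      (2 * (x - t) / ((x - t) ^ 2 + η ^ 2)) x := by
    simpa using ((((hasDerivAt_id x).sub_const t).pow 2).add_const (η ^ 2)).log hN.ne'
  have hlogD : HasDerivAt (fun y => log (y ^ 2 + η ^ 2)) (2 * x / (x ^ 2 + η ^ 2)) x := by
    simpa using (((hasDerivAt_id x).pow 2).add_const (η ^ 2)).log hD.ne'
  rw [show gReg η t = fun y => (log ((y - t) ^ 2 + η ^ 2) - log (y ^ 2 + η ^ 2)) / 2 from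
    funext (gReg_eq hη t)]
  refine ((hlogN.sub hlogD).div_const 2).congr_deriv ?_
  field_simp
  ring

lemma exists_abs_deriv_gReg_le {η : ℝ} (hη : 0 < η) (t : ℝ) : ∃ B, ∀ x,
    |t * (x * (x - t) - η ^ 2) / (((x - t) ^ 2 + η ^ 2) * (x ^ 2 + η ^ 2))| ≤
      B * (1 + x ^ 2)⁻¹ := by
  obtain ⟨K, hK⟩ := exists_inv_add_inv_le t hη
  refine ⟨|t| / 2 * K, fun x => ?_⟩
  have hN : 0 < (x - t) ^ 2 + η ^ 2 := by positivity
  have hD : 0 < x ^ 2 + η ^ 2 := by positivity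
  have hnum : |x * (x - t) - η ^ 2| ≤ ((x - t) ^ 2 + η ^ 2 + (x ^ 2 + η ^ 2)) / 2 := by
    rw [abs_le]; constructor <;> nlinarith [sq_nonneg (x - (x - t)), sq_nonneg (x + (x - t))]
  calc |t * (x * (x - t) - η ^ 2) / (((x - t) ^ 2 + η ^ 2) * (x ^ 2 + η ^ 2))|
      = |t| * |x * (x - t) - η ^ 2| / (((x - t) ^ 2 + η ^ 2) * (x ^ 2 + η ^ 2)) := by
        rw [abs_div, abs_mul, abs_of_pos (mul_pos hN hD)]
    _ ≤ |t| * (((x - t) ^ 2 + η ^ 2 + (x ^ 2 + η ^ 2)) / 2) /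
          (((x - t) ^ 2 + η ^ 2) * (x ^ 2 + η ^ 2)) := by
        gcongr
    _ = |t| / 2 * (((x - t) ^ 2 + η ^ 2)⁻¹ + (x ^ 2 + η ^ 2)⁻¹) := by
        field_simp; ring
    _ ≤ |t| / 2 * K * (1 + x ^ 2)⁻¹ := by
        rw [mul_assoc]; gcongr; exact hK x

lemma exists_gReg_sq_le {η : ℝ} (hη : 0 < η) (t : ℝ) : ∃ A, ∀ x,
    gReg η t x ^ 2 ≤ A * (1 + x ^ 2)⁻¹ := by
  obtain ⟨K, hK⟩ := exists_inv_add_inv_le t hη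
  refine ⟨t ^ 2 * (2 * t ^ 2 + 8) * K ^ 2 / 4, fun x => ?_⟩
  have hlog := abs_log_sub_log_le (a := (x - t) ^ 2 + η ^ 2) (b := x ^ 2 + η ^ 2) (by positivity)
    (by positivity)
  rw [show (x - t) ^ 2 + η ^ 2 - (x ^ 2 + η ^ 2) = t * (t - 2 * x) by ring] at hlog
  have habs : |gReg η t x| ≤ |t| * |t - 2 * x| * K * (1 + x ^ 2)⁻¹ / 2 := by
    rw [gReg_eq hη, abs_div, abs_two, div_le_div_iff_of_pos_right two_pos]
    calc _ ≤ |t * (t - 2 * x)| * (((x - t) ^ 2 + η ^ 2)⁻¹ + (x ^ 2 + η ^ 2)⁻¹) := hlog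
      _ ≤ |t * (t - 2 * x)| * (K * (1 + x ^ 2)⁻¹) := by gcongr; exact hK x
      _ = _ := by rw [abs_mul]; ring
  have hlin : (t - 2 * x) ^ 2 * (1 + x ^ 2)⁻¹ ≤ 2 * t ^ 2 + 8 := by
    rw [← div_eq_mul_inv, div_le_iff₀ (by positivity)]
    nlinarith [sq_nonneg (t * x + 2), sq_nonneg (t + 2 * x)]
  calc gReg η t x ^ 2 ≤ (|t| * |t - 2 * x| * K * (1 + x ^ 2)⁻¹ / 2) ^ 2 := by
        simpa only [sq_abs] using pow_le_pow_left₀ (abs_nonneg _) habs 2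
    _ = t ^ 2 * K ^ 2 / 4 * ((t - 2 * x) ^ 2 * (1 + x ^ 2)⁻¹) * (1 + x ^ 2)⁻¹ := by
        rw [div_pow, mul_pow, mul_pow, mul_pow, sq_abs, sq_abs]; ring
    _ ≤ t ^ 2 * K ^ 2 / 4 * (2 * t ^ 2 + 8) * (1 + x ^ 2)⁻¹ := by gcongr
    _ = _ := by ring

/-- For η > 0 and t ∈ ℝ, g_t belongs to H^{1/2}(ℝ):
∬_{ℝ²} |g_t(x) − g_t(y)|²/(x−y)² dx dy < ∞. -/
theorem gReg_mem_H_half (η t : ℝ) (hη : 0 < η) :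
    MeasureTheory.Integrable
      (fun p : ℝ × ℝ => (gReg η t p.1 - gReg η t p.2) ^ 2 / (p.1 - p.2) ^ 2) := by
  obtain ⟨A, hA⟩ := exists_gReg_sq_le hη t
  obtain ⟨B, hB⟩ := exists_abs_deriv_gReg_le hη t
  have hderiv := hasDerivAt_gReg hη t
  have hcont : Continuous (gReg η t) :=
    continuous_iff_continuousAt.2 fun x => (hderiv x).continuousAt
  exact integrable_sq_sub_div_sq_of_decay hcont.measurable hA
    fun _ _ => abs_sub_le_of_abs_deriv_le_mul_inv_one_add_sq hderiv hB
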